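/- arXiv:1703.00684 — 2 statements merged into one kernel-verified Lean document; each statement's English description precedes it below -/
import Mathlib

section
/- Let $p$ be a prime, let $F_r$ be a finite abelian $p$-group of rank $r \ge 1$ and exponent $p^\ell$, let $e_\ell \in F_r$ be an element of order $p^\ell$, and let $F_{r-1}$ be a subgroup of $F_r$ such that $F_r = F_{r-1} \oplus \mathbb{Z}e_\ell$ (internal direct sum with the cyclic subgroup generated by $e_\ell$). Then for every complex number $a$: $(p^a - 1)\,\sigma_a(F_r) = p^{a\ell + a}\,|F_{r-1}|\,\sigma_{a-1}(F_{r-1}) - \sigma_{a+1}(F_{r-1})$. -/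
open scoped Classical

/-- `sigma a F = ∑_{H ≤ F} |H|^a`, the sum ranging over all subgroups `H` of `F`,
where `|H|^a` is the complex power of the positive integer `|H|`. -/
noncomputable def sigmaA (a : ℂ) (F : Type*) [AddCommGroup F] : ℂ :=
  ∑ᶠ H : AddSubgroup F, (Nat.card H : ℂ) ^ a

open AddSubgroup

section CyclicAux

variable (n : ℕ) [NeZero n]

/-- multiplication by `m` as an additive hom. -/
private def smulHom (m : ℕ) : ZMod n →+ ZMod n :=
  AddMonoidHom.mk' (fun c => m • c) (fun a b => smul_add m a b)

private lemma smulHom_apply (m : ℕ) (c : ZMod n) : smulHom n m c = m • c := rfl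

/-- the `m`-torsion subgroup of `ZMod n`. -/
private def tors (m : ℕ) : AddSubgroup (ZMod n) := (smulHom n m).ker

private lemma mem_tors {m : ℕ} {c : ZMod n} : c ∈ tors n m ↔ m • c = 0 := Iff.rfl

private lemma ordc {m : ℕ} (hd : m ∣ n) :
    addOrderOf ((n / m : ℕ) : ZMod n) = m := by
  rw [ZMod.addOrderOf_coe _ (NeZero.ne n), Nat.gcd_eq_right (Nat.div_dvd_of_dvd hd),
    Nat.div_div_self hd (NeZero.ne n)]

private lemma tors_eq {m : ℕ} (hd : m ∣ n) :
    tors n m = zmultiples ((n / m : ℕ) : ZMod n) := by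
  have hm0 : m ≠ 0 := by rintro rfl; exact NeZero.ne n (Nat.eq_zero_of_zero_dvd hd)
  ext c
  rw [mem_tors, mem_zmultiples_iff]
  constructor
  · intro hc
    have hval : ((m * c.val : ℕ) : ZMod n) = 0 := by
      push_cast
      rw [ZMod.natCast_val, ZMod.cast_id, ← nsmul_eq_mul]
      exact hc
    have hdvd : n ∣ m * c.val := (ZMod.natCast_eq_zero_iff _ n).mp hval
    have h2 : n / m ∣ c.val := by
      obtain ⟨t, ht⟩ := hdvd
      refine ⟨t, ?_⟩
      have hn : m * (n / m) = n := Nat.mul_div_cancel' hd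
      have : m * c.val = m * ((n / m) * t) := by
        rw [ht]; nth_rewrite 1 [← hn]; ring
      exact Nat.eq_of_mul_eq_mul_left (Nat.pos_of_ne_zero hm0) this
    obtain ⟨t, ht⟩ := h2
    refine ⟨(t : ℤ), ?_⟩
    have : ((c.val : ℕ) : ZMod n) = c := by rw [ZMod.natCast_val, ZMod.cast_id]
    rw [← this, ht]
    push_cast
    rw [natCast_zsmul, nsmul_eq_mul]
    push_cast
    ring
  · rintro ⟨t, rfl⟩
    rw [smul_comm]
    have : (m : ℕ) • ((n / m : ℕ) : ZMod n) = 0 := by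
      rw [nsmul_eq_mul, ← Nat.cast_mul, Nat.mul_div_cancel' hd, ZMod.natCast_self]
    rw [this, smul_zero]

private lemma card_tors {m : ℕ} (hd : m ∣ n) : Nat.card (tors n m) = m := by
  rw [tors_eq n hd, Nat.card_zmultiples, ordc n hd]

/-- every subgroup of `ZMod n` is a torsion subgroup. -/
private lemma eq_tors (D : AddSubgroup (ZMod n)) : D = tors n (Nat.card D) := by
  have hdvd : Nat.card D ∣ n := by
    have := D.card_addSubgroup_dvd_card
    rwa [Nat.card_zmod] at this
  have hle : D ≤ tors n (Nat.card D) := by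
    intro c hc
    rw [mem_tors]
    have h1 : addOrderOf (⟨c, hc⟩ : D) ∣ Nat.card D := addOrderOf_dvd_natCard _
    have h2 : (Nat.card D) • (⟨c, hc⟩ : D) = 0 := addOrderOf_dvd_iff_nsmul_eq_zero.mp h1
    have h3 : ((Nat.card D • (⟨c, hc⟩ : D) : D) : ZMod n) = Nat.card D • c := rfl
    rw [h2] at h3
    exact h3.symm ▸ rfl
  apply SetLike.coe_injective
  refine Set.eq_of_subset_of_ncard_le hle ?_ (Set.toFinite _)
  have e1 : (tors n (Nat.card D) : Set (ZMod n)).ncard = Nat.card D := by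
    rw [← Nat.card_coe_set_eq]
    simpa using card_tors n hdvd
  have e2 : (D : Set (ZMod n)).ncard = Nat.card D := by
    rw [← Nat.card_coe_set_eq]
    simp
  rw [e1, e2]

private lemma exists_smul_eq {m m'' : ℕ} (hm : m ∣ n) (h : m * m'' ∣ n) (c : ZMod n)
    (hc : m • c = 0) : ∃ y : ZMod n, m'' • y = c := by
  have hc' : c ∈ zmultiples ((n / m : ℕ) : ZMod n) := by
    rw [← tors_eq n hm]; exact hc
  obtain ⟨t, ht⟩ := mem_zmultiples_iff.mp hc'
  refine ⟨t • ((n / (m * m'') : ℕ) : ZMod n), ?_⟩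
  rw [smul_comm]
  have key : m'' • ((n / (m * m'') : ℕ) : ZMod n) = ((n / m : ℕ) : ZMod n) := by
    have hmm : m'' * (n / (m * m'')) = n / m := by
      have h1 : n / (m * m'') = n / m / m'' := by rw [Nat.div_div_eq_div_mul]
      have h2 : m'' ∣ n / m := (Nat.dvd_div_iff_mul_dvd hm).mpr h
      rw [h1, Nat.mul_div_cancel' h2]
    rw [nsmul_eq_mul, ← Nat.cast_mul, hmm]
  rw [key, ht]

end CyclicAux
section Phi

variable (n : ℕ) [NeZero n] {Q : Type*} [AddCommGroup Q]

private noncomputable def cgen (x : Q) : ZMod n := ((n / addOrderOf x : ℕ) : ZMod n)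

private lemma addOrderOf_cgen {x : Q} (hd : addOrderOf x ∣ n) :
    addOrderOf (cgen n x) = addOrderOf x := ordc n hd

private lemma cgen_wd {x : Q} (hd : addOrderOf x ∣ n) {t t' : ℤ} (h : t • x = t' • x) :
    t • cgen n x = t' • cgen n x := by
  have h0 : (t - t') • x = 0 := by rw [sub_zsmul, h, add_neg_cancel]
  have h1 : (addOrderOf x : ℤ) ∣ (t - t') := addOrderOf_dvd_iff_zsmul_eq_zero.mpr h0
  have h2 : (addOrderOf (cgen n x) : ℤ) ∣ (t - t') := by rwa [addOrderOf_cgen n hd]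
  have h3 : (t - t') • cgen n x = 0 := addOrderOf_dvd_iff_zsmul_eq_zero.mp h2
  rw [sub_zsmul] at h3
  linear_combination (norm := abel) h3

private noncomputable def phi (x : Q) (hd : addOrderOf x ∣ n) : zmultiples x →+ ZMod n :=
  AddMonoidHom.mk' (fun z => (mem_zmultiples_iff.mp z.2).choose • cgen n x)
    (by
      rintro ⟨z, hz⟩ ⟨w, hw⟩
      have hz' := (mem_zmultiples_iff.mp hz).choose_spec
      have hw' := (mem_zmultiples_iff.mp hw).choose_spec
      have hs' := (mem_zmultiples_iff.mp
        (show z + w ∈ zmultiples x from add_mem hz hw)).choose_spec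
      show (mem_zmultiples_iff.mp (add_mem hz hw)).choose • cgen n x = _
      rw [← add_zsmul]
      apply cgen_wd n hd
      rw [hs', add_zsmul, hz', hw'])

private lemma phi_apply {x : Q} (hd : addOrderOf x ∣ n) (z : zmultiples x) (t : ℤ)
    (ht : (z : Q) = t • x) : phi n x hd z = t • cgen n x := by
  obtain ⟨z, hz⟩ := z
  show (mem_zmultiples_iff.mp hz).choose • cgen n x = _
  apply cgen_wd n hd
  rw [(mem_zmultiples_iff.mp hz).choose_spec]
  exact ht

private lemma phi_self {x : Q} (hd : addOrderOf x ∣ n) :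
    phi n x hd ⟨x, mem_zmultiples x⟩ = cgen n x := by
  have := phi_apply n hd ⟨x, mem_zmultiples x⟩ 1 (one_zsmul x).symm
  rwa [one_zsmul] at this

private lemma phi_inj {x : Q} (hd : addOrderOf x ∣ n) : Function.Injective (phi n x hd) := by
  rw [injective_iff_map_eq_zero]
  rintro ⟨z, hz⟩ h0
  obtain ⟨t, ht⟩ := mem_zmultiples_iff.mp hz
  rw [phi_apply n hd ⟨z, hz⟩ t ht.symm] at h0
  have h1 : (addOrderOf (cgen n x) : ℤ) ∣ t := addOrderOf_dvd_iff_zsmul_eq_zero.mpr h0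
  rw [addOrderOf_cgen n hd] at h1
  have h2 : t • x = 0 := addOrderOf_dvd_iff_zsmul_eq_zero.mp h1
  exact Subtype.ext (by rw [ht] at h2; exact h2)

end Phi
section Duality

private instance homFinite (A B : Type*) [AddGroup A] [AddGroup B] [Finite A] [Finite B] :
    Finite (A →+ B) :=
  Finite.of_injective (fun f => (f : A → B)) DFunLike.coe_injective

variable (n : ℕ) [NeZero n]

private lemma card_torsion_sub {m : ℕ} (hm : m ∣ n) :
    Nat.card {c : ZMod n // m • c = 0} = m := by
  have e : {c : ZMod n // m • c = 0} ≃ tors n m :=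
    Equiv.subtypeEquivRight (fun c => (mem_tors n).symm)
  rw [Nat.card_congr e, card_tors n hm]

private lemma card_hom_zmod (m : ℕ) (M : Type*) [AddCommGroup M] :
    Nat.card (ZMod m →+ M) = Nat.card {c : M // m • c = 0} := by
  refine (Nat.card_congr ?_).symm
  refine Equiv.trans ?_ (ZMod.lift m)
  refine Equiv.subtypeEquiv (zmultiplesHom M) (fun c => ?_)
  rw [zmultiplesHom_apply, natCast_zsmul]

private lemma card_hom_eq {A : Type*} [AddCommGroup A] [Finite A]
    (hA : ∀ x : A, n • x = 0) : Nat.card (A →+ ZMod n) = Nat.card A := by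
  obtain ⟨ι, hι, m, h1, ⟨e0⟩⟩ := AddCommGroup.equiv_directSum_zmod_of_finite' A
  haveI := hι
  haveI : ∀ i, NeZero (m i) := fun i => ⟨by have := h1 i; omega⟩
  set E : A ≃+ ∀ i, ZMod (m i) := e0.trans (DirectSum.addEquivProd _) with hE
  have hdvd : ∀ i, m i ∣ n := by
    intro i
    have hx : E (n • E.symm (Pi.single i (1 : ZMod (m i)))) = E (E.symm 0) := by
      rw [hA _]; rw [map_zero, E.apply_symm_apply]
    rw [map_nsmul, E.apply_symm_apply, E.apply_symm_apply] at hx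
    have hx2 := congrFun hx i
    rw [Pi.smul_apply, Pi.single_eq_same, Pi.zero_apply] at hx2
    have hx3 : ((n : ℕ) : ZMod (m i)) = 0 := by rwa [nsmul_eq_mul, mul_one] at hx2
    exact (ZMod.natCast_eq_zero_iff n (m i)).mp hx3
  calc Nat.card (A →+ ZMod n)
      = Nat.card ((∀ i, ZMod (m i)) →+ ZMod n) :=
        Nat.card_congr (AddEquiv.addMonoidHomCongrLeftEquiv E)
    _ = Nat.card (∀ i, ZMod (m i) →+ ZMod n) :=
        Nat.card_congr (Pi.addMonoidHomAddEquiv _ _).toEquiv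
    _ = ∏ i, Nat.card (ZMod (m i) →+ ZMod n) := Nat.card_pi
    _ = ∏ i, m i := by
        refine Finset.prod_congr rfl (fun i _ => ?_)
        rw [card_hom_zmod (m i) (ZMod n), card_torsion_sub n (hdvd i)]
    _ = Nat.card A := by
        rw [Nat.card_congr E.toEquiv, Nat.card_pi]
        exact (Finset.prod_congr rfl (fun i _ => Nat.card_zmod (m i))).symm

end Duality
section FiberCount

private lemma addsub_eq_of_le_of_card {X : Type*} [AddGroup X] {H K : AddSubgroup X} (h : H ≤ K)
    (hc : Nat.card K ≤ Nat.card H) (hf : (K : Set X).Finite) : H = K := by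
  apply SetLike.coe_injective
  apply Set.eq_of_subset_of_ncard_le h ?_ hf
  rw [← Nat.card_coe_set_eq, ← Nat.card_coe_set_eq]
  simpa using hc

variable (n : ℕ) [NeZero n] {G : Type*} [AddCommGroup G] [Finite G]

private def kermap (t : Σ A : AddSubgroup G, (A →+ ZMod n)) : AddSubgroup G :=
  t.2.ker.map t.1.subtype

private lemma sigma_eval {A A' : AddSubgroup G} {f : A →+ ZMod n} {f' : A' →+ ZMod n}
    (h : (⟨A, f⟩ : Σ A : AddSubgroup G, (A →+ ZMod n)) = ⟨A', f'⟩) (g : G) (hg : g ∈ A)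
    (hg' : g ∈ A') : f ⟨g, hg⟩ = f' ⟨g, hg'⟩ := by
  obtain ⟨h1, h2⟩ := Sigma.ext_iff.mp h
  simp only at h1 h2
  subst h1
  rw [eq_of_heq h2]

private lemma sigma_make {A A' : AddSubgroup G} (h : A = A') {f : A →+ ZMod n}
    {f' : A' →+ ZMod n} (hf : ∀ g (hg : g ∈ A) (hg' : g ∈ A'), f ⟨g, hg⟩ = f' ⟨g, hg'⟩) :
    (⟨A, f⟩ : Σ A : AddSubgroup G, (A →+ ZMod n)) = ⟨A', f'⟩ := by
  subst h
  congr 1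
  ext ⟨g, hg⟩
  exact hf g hg hg

variable (hexp : ∀ g : G, n • g = 0) (B₀ : AddSubgroup G)

include hexp

private lemma quot_ord (q : G ⧸ B₀) : addOrderOf q ∣ n := by
  rw [addOrderOf_dvd_iff_nsmul_eq_zero]
  induction q using QuotientAddGroup.induction_on with
  | H z =>
    have : ((n • z : G) : G ⧸ B₀) = n • (z : G ⧸ B₀) := by
      exact map_nsmul (QuotientAddGroup.mk' B₀) n z
    rw [← this, hexp z]
    rfl

private noncomputable def theta (q : G ⧸ B₀) :
    {t : Σ A : AddSubgroup G, (A →+ ZMod n) // kermap n t = B₀} := by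
  refine ⟨⟨(zmultiples q).comap (QuotientAddGroup.mk' B₀),
    (phi n q (quot_ord n hexp B₀ q)).comp
      ((((QuotientAddGroup.mk' B₀)).comp
        ((zmultiples q).comap (QuotientAddGroup.mk' B₀)).subtype).codRestrict
        (zmultiples q) (fun a => a.2))⟩, ?_⟩
  -- kermap = B₀
  ext g
  simp only [kermap, AddSubgroup.mem_map]
  constructor
  · rintro ⟨⟨g', hg'⟩, hker, rfl⟩
    have h0 : phi n q (quot_ord n hexp B₀ q)
        (⟨QuotientAddGroup.mk' B₀ g', hg'⟩ : zmultiples q) = 0 := hker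
    have h1 := (injective_iff_map_eq_zero _).mp (phi_inj n (quot_ord n hexp B₀ q)) _ h0
    have h2 : QuotientAddGroup.mk' B₀ g' = 0 := congrArg Subtype.val h1
    exact (QuotientAddGroup.eq_zero_iff g').mp h2
  · intro hg
    have hmk : QuotientAddGroup.mk' B₀ g = 0 := (QuotientAddGroup.eq_zero_iff g).mpr hg
    have hA : g ∈ (zmultiples q).comap (QuotientAddGroup.mk' B₀) := by
      show QuotientAddGroup.mk' B₀ g ∈ zmultiples q
      rw [hmk]; exact zero_mem _
    refine ⟨⟨g, hA⟩, ?_, rfl⟩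
    show phi n q (quot_ord n hexp B₀ q) ⟨QuotientAddGroup.mk' B₀ g, hA⟩ = 0
    have h00 : (⟨QuotientAddGroup.mk' B₀ g, hA⟩ : zmultiples q) = 0 := Subtype.ext hmk
    rw [h00, map_zero]

private lemma theta_inj : Function.Injective (theta n hexp B₀) := by
  intro q q' h
  have h' : ((theta n hexp B₀ q) : Σ A : AddSubgroup G, (A →+ ZMod n))
      = (theta n hexp B₀ q' : Σ A : AddSubgroup G, (A →+ ZMod n)) := by rw [h]
  have hA : (zmultiples q).comap (QuotientAddGroup.mk' B₀)
      = (zmultiples q').comap (QuotientAddGroup.mk' B₀) := congrArg Sigma.fst h'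
  have hsurj := QuotientAddGroup.mk'_surjective B₀
  have hZ : zmultiples q = zmultiples q' := by
    rw [← map_comap_eq_self_of_surjective hsurj (zmultiples q),
      ← map_comap_eq_self_of_surjective hsurj (zmultiples q'), hA]
  have hord : addOrderOf q = addOrderOf q' := by
    rw [← Nat.card_zmultiples q, ← Nat.card_zmultiples q', hZ]
  have hq' : q' ∈ zmultiples q := hZ ▸ mem_zmultiples q'
  obtain ⟨t, ht⟩ := mem_zmultiples_iff.mp hq'
  obtain ⟨g₀, hg₀⟩ := hsurj q'
  have hg₀A' : g₀ ∈ (zmultiples q').comap (QuotientAddGroup.mk' B₀) := by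
    show QuotientAddGroup.mk' B₀ g₀ ∈ zmultiples q'
    rw [hg₀]; exact mem_zmultiples q'
  have hg₀A : g₀ ∈ (zmultiples q).comap (QuotientAddGroup.mk' B₀) := by
    show QuotientAddGroup.mk' B₀ g₀ ∈ zmultiples q
    rw [hg₀]; exact hq'
  have heval := sigma_eval n h' g₀ hg₀A hg₀A'
  have hL : phi n q (quot_ord n hexp B₀ q) ⟨QuotientAddGroup.mk' B₀ g₀, hg₀A⟩
      = t • cgen n q := by
    apply phi_apply
    show QuotientAddGroup.mk' B₀ g₀ = t • q
    rw [hg₀, ← ht]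
  have hR : phi n q' (quot_ord n hexp B₀ q') ⟨QuotientAddGroup.mk' B₀ g₀, hg₀A'⟩
      = cgen n q' := by
    have := phi_apply n (quot_ord n hexp B₀ q') ⟨QuotientAddGroup.mk' B₀ g₀, hg₀A'⟩ 1
      (by show QuotientAddGroup.mk' B₀ g₀ = 1 • q'; rw [hg₀, one_zsmul])
    rwa [one_zsmul] at this
  have heval' : t • cgen n q = cgen n q := by
    have hcg : cgen n q' = cgen n q := by unfold cgen; rw [hord]
    rw [← hL]
    rw [show phi n q (quot_ord n hexp B₀ q) ⟨QuotientAddGroup.mk' B₀ g₀, hg₀A⟩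
      = phi n q' (quot_ord n hexp B₀ q') ⟨QuotientAddGroup.mk' B₀ g₀, hg₀A'⟩ from heval]
    rw [hR, hcg]
  have h5 : (t - 1) • cgen n q = 0 := by
    rw [sub_zsmul, heval', one_zsmul, add_neg_cancel]
  have h6 : (addOrderOf q : ℤ) ∣ t - 1 := by
    rw [← addOrderOf_cgen n (quot_ord n hexp B₀ q)]
    exact addOrderOf_dvd_iff_zsmul_eq_zero.mpr h5
  have h7 : (t - 1) • q = 0 := addOrderOf_dvd_iff_zsmul_eq_zero.mp h6
  have h8 : t • q = q := by
    rw [sub_zsmul, one_zsmul] at h7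
    linear_combination (norm := abel) h7
  rw [← ht, h8]

private lemma theta_surj : Function.Surjective (theta n hexp B₀) := by
  rintro ⟨⟨A, f⟩, hB⟩
  have mk := QuotientAddGroup.mk' B₀
  have hBA : B₀ ≤ A := by
    intro g hg
    rw [← hB] at hg
    obtain ⟨x, _, rfl⟩ := AddSubgroup.mem_map.mp hg
    exact x.2
  -- well-definedness key
  have key : ∀ (g g' : G) (hg : g ∈ A) (hg' : g' ∈ A),
      QuotientAddGroup.mk' B₀ g = QuotientAddGroup.mk' B₀ g' → f ⟨g, hg⟩ = f ⟨g', hg'⟩ := by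
    intro g g' hg hg' hmk
    have hsub : g - g' ∈ B₀ := by
      obtain ⟨z, hz, hzz⟩ := (QuotientAddGroup.mk'_eq_mk' B₀).mp hmk
      have : g - g' = -z := by rw [← hzz]; abel
      rw [this]
      exact neg_mem hz
    rw [← hB] at hsub
    obtain ⟨x, hxker, hxval⟩ := AddSubgroup.mem_map.mp hsub
    have hxx : (⟨g, hg⟩ - ⟨g', hg'⟩ : A) = x := Subtype.ext (by simpa using hxval.symm)
    have : f (⟨g, hg⟩ - ⟨g', hg'⟩) = 0 := by rw [hxx]; exact hxker
    rw [map_sub, sub_eq_zero] at this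
    exact this
  -- the descended injective hom on Z := A.map mk
  set Z : AddSubgroup (G ⧸ B₀) := A.map (QuotientAddGroup.mk' B₀) with hZdef
  have hmem : ∀ z : Z, ∃ g, ∃ hg : g ∈ A, QuotientAddGroup.mk' B₀ g = (z : G ⧸ B₀) := by
    rintro ⟨z, hz⟩
    obtain ⟨g, hg, hgz⟩ := AddSubgroup.mem_map.mp hz
    exact ⟨g, hg, hgz⟩
  choose rep repA repmk using hmem
  have repadd : ∀ z w : Z, f ⟨rep (z + w), repA (z + w)⟩ = f ⟨rep z, repA z⟩ + f ⟨rep w, repA w⟩ := by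
    intro z w
    have h1 : f ⟨rep (z + w), repA (z + w)⟩ = f (⟨rep z, repA z⟩ + ⟨rep w, repA w⟩) := by
      apply key
      rw [repmk (z + w), map_add, repmk z, repmk w]
      rfl
    rw [h1, map_add]
  set ψ : Z →+ ZMod n := AddMonoidHom.mk' (fun z => f ⟨rep z, repA z⟩) repadd with hψdef
  have ψ_spec : ∀ (g : G) (hg : g ∈ A) (hz : QuotientAddGroup.mk' B₀ g ∈ Z),
      ψ ⟨QuotientAddGroup.mk' B₀ g, hz⟩ = f ⟨g, hg⟩ := by
    intro g hg hz
    apply key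
    exact repmk ⟨QuotientAddGroup.mk' B₀ g, hz⟩
  have ψinj : Function.Injective ψ := by
    rw [injective_iff_map_eq_zero]
    rintro ⟨z, hz⟩ h0
    have hker : (⟨rep ⟨z, hz⟩, repA ⟨z, hz⟩⟩ : A) ∈ f.ker := h0
    have hB₀ : rep ⟨z, hz⟩ ∈ B₀ := by
      have hmm : rep ⟨z, hz⟩ ∈ kermap n ⟨A, f⟩ := AddSubgroup.mem_map.mpr ⟨_, hker, rfl⟩
      exact hB ▸ hmm
    apply Subtype.ext
    show z = 0
    have hz0 : QuotientAddGroup.mk' B₀ (rep ⟨z, hz⟩) = 0 :=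
      (QuotientAddGroup.eq_zero_iff _).mpr hB₀
    exact Eq.trans (repmk ⟨z, hz⟩).symm hz0
  -- cardinalities
  have hcZ : Nat.card Z = Nat.card ψ.range := by
    have h1 : Nat.card (Set.range ⇑ψ) = Nat.card Z := Nat.card_range_of_injective ψinj
    have h2 : (ψ.range : Set (ZMod n)) = Set.range ⇑ψ := AddMonoidHom.coe_range ψ
    rw [← h1]
    exact Nat.card_congr (Equiv.setCongr h2)
  have hdZ : Nat.card Z ∣ n := by
    rw [hcZ]
    have := ψ.range.card_addSubgroup_dvd_card
    rwa [Nat.card_zmod] at this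
  have hD : ψ.range = tors n (Nat.card Z) := by
    rw [eq_tors n ψ.range, ← hcZ]
  have hc₀ : ((n / Nat.card Z : ℕ) : ZMod n) ∈ ψ.range := by
    rw [hD, tors_eq n hdZ]
    exact mem_zmultiples _
  obtain ⟨z₀, hz₀⟩ := hc₀
  set q : G ⧸ B₀ := (z₀ : G ⧸ B₀) with hqdef
  have hordq : addOrderOf q = Nat.card Z := by
    have h1 : addOrderOf (ψ z₀) = addOrderOf z₀ := addOrderOf_injective ψ ψinj z₀
    have h2 : addOrderOf q = addOrderOf z₀ := by
      exact addOrderOf_injective Z.subtype Z.subtype_injective z₀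
    have h3 : addOrderOf (ψ z₀) = Nat.card Z := by rw [hz₀]; exact ordc n hdZ
    rw [h2, ← h1, h3]
  have hdq : addOrderOf q ∣ n := by rw [hordq]; exact hdZ
  have hZq : zmultiples q = Z := by
    apply addsub_eq_of_le_of_card (zmultiples_le.mpr z₀.2)
    · rw [Nat.card_zmultiples, hordq]
    · exact Set.toFinite _
  -- now assemble
  refine ⟨q, ?_⟩
  apply Subtype.ext
  apply sigma_make
  · show (zmultiples q).comap (QuotientAddGroup.mk' B₀) = A
    rw [hZq, hZdef, comap_map_eq, QuotientAddGroup.ker_mk', sup_eq_left.mpr hBA]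
  · intro g hgAq hgA
    have hgz : QuotientAddGroup.mk' B₀ g ∈ zmultiples q := hgAq
    have hgZ : QuotientAddGroup.mk' B₀ g ∈ Z := hZq ▸ hgz
    show phi n q (quot_ord n hexp B₀ q) ⟨QuotientAddGroup.mk' B₀ g, hgz⟩ = f ⟨g, hgA⟩
    rw [← ψ_spec g hgA hgZ]
    obtain ⟨t, ht⟩ := mem_zmultiples_iff.mp hgz
    rw [phi_apply n (quot_ord n hexp B₀ q) ⟨QuotientAddGroup.mk' B₀ g, hgz⟩ t ht.symm]
    have hzt : (⟨QuotientAddGroup.mk' B₀ g, hgZ⟩ : Z) = t • z₀ := by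
      apply Subtype.ext
      show QuotientAddGroup.mk' B₀ g = ((t • z₀ : Z) : G ⧸ B₀)
      rw [← ht]
      rfl
    rw [hzt, map_zsmul, hz₀]
    show t • cgen n q = _
    unfold cgen
    rw [hordq]

private lemma card_fiber :
    Nat.card {t : Σ A : AddSubgroup G, (A →+ ZMod n) // kermap n t = B₀}
      = Nat.card (G ⧸ B₀) :=
  (Nat.card_congr (Equiv.ofBijective _
    ⟨theta_inj n hexp B₀, theta_surj n hexp B₀⟩)).symm

end FiberCount
section Goursat

variable (n : ℕ) [NeZero n] {G : Type*} [AddCommGroup G] [Finite G]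

private lemma nsmul_card_eq_zero {X : Type*} [AddGroup X] (D : AddSubgroup X) {c : X}
    (hc : c ∈ D) : Nat.card D • c = 0 := by
  have h1 : addOrderOf (⟨c, hc⟩ : D) ∣ Nat.card D := addOrderOf_dvd_natCard _
  have h2 : (Nat.card D) • (⟨c, hc⟩ : D) = 0 := addOrderOf_dvd_iff_nsmul_eq_zero.mp h1
  have h3 : ((Nat.card D • (⟨c, hc⟩ : D) : D) : X) = Nat.card D • c := rfl
  rw [h2] at h3
  simpa using h3.symm

private def gsub (A : AddSubgroup G) (f : A →+ ZMod n) (m : ℕ) :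
    AddSubgroup (G × ZMod n) where
  carrier := {w | ∃ h : w.1 ∈ A, m • w.2 = f ⟨w.1, h⟩}
  zero_mem' := by
    refine ⟨A.zero_mem, ?_⟩
    have he : (⟨(0 : G × ZMod n).1, A.zero_mem⟩ : A) = 0 := Subtype.ext rfl
    rw [he, map_zero]
    exact smul_zero m
  add_mem' := by
    rintro ⟨x, y⟩ ⟨x', y'⟩ ⟨h, hy⟩ ⟨h', hy'⟩
    refine ⟨A.add_mem h h', ?_⟩
    have he : (⟨x + x', A.add_mem h h'⟩ : A) = ⟨x, h⟩ + ⟨x', h'⟩ := rfl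
    show m • (y + y') = f ⟨x + x', A.add_mem h h'⟩
    rw [he, map_add, ← hy, ← hy', smul_add]
  neg_mem' := by
    rintro ⟨x, y⟩ ⟨h, hy⟩
    refine ⟨A.neg_mem h, ?_⟩
    have he : (⟨-x, A.neg_mem h⟩ : A) = -⟨x, h⟩ := rfl
    show m • (-y) = f ⟨-x, A.neg_mem h⟩
    rw [he, map_neg, ← hy, smul_neg]

private lemma mem_gsub {A : AddSubgroup G} {f : A →+ ZMod n} {m : ℕ} {w : G × ZMod n} :
    w ∈ gsub n A f m ↔ ∃ h : w.1 ∈ A, m • w.2 = f ⟨w.1, h⟩ := Iff.rfl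

private lemma gsub_solv (A : AddSubgroup G) (f : A →+ ZMod n) (m : ℕ)
    (hm : Nat.card f.range * m ∣ n) (x : A) : ∃ y, m • y = f x := by
  have hd : Nat.card f.range ∣ n := dvd_trans ⟨m, rfl⟩ hm
  have hfx : Nat.card f.range • f x = 0 :=
    nsmul_card_eq_zero f.range ⟨x, rfl⟩
  exact exists_smul_eq n hd hm (f x) hfx

private lemma card_gsub (A : AddSubgroup G) (f : A →+ ZMod n) (m : ℕ)
    (hm : Nat.card f.range * m ∣ n) :
    Nat.card (gsub n A f m) = Nat.card A * m := by
  have hmn : m ∣ n := dvd_trans (Dvd.intro_left _ rfl) hm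
  set π : gsub n A f m →+ A :=
    ((AddMonoidHom.fst G (ZMod n)).comp (gsub n A f m).subtype).codRestrict A
      (fun w => by obtain ⟨h, -⟩ := w.2; exact h) with hπ
  have hπval : ∀ w : gsub n A f m, (π w : G) = (w : G × ZMod n).1 := fun w => rfl
  have hπs : Function.Surjective π := by
    intro x
    obtain ⟨y, hy⟩ := gsub_solv n A f m hm x
    refine ⟨⟨((x : G), y), ⟨x.2, ?_⟩⟩, ?_⟩
    · rwa [Subtype.coe_eta]
    · exact Subtype.ext rfl
  have hker : Nat.card π.ker = m := by
    have e : π.ker ≃ {y : ZMod n // m • y = 0} := by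
      refine ⟨fun w => ⟨(w : gsub n A f m).1.2, ?_⟩,
        fun y => ⟨⟨((0 : G), y.1), ⟨A.zero_mem, by rw [y.2]; exact (map_zero f).symm⟩⟩,
          Subtype.ext (by rfl)⟩, ?_, ?_⟩
      · obtain ⟨h, hy⟩ := (w : gsub n A f m).2
        have h0 : ((w : gsub n A f m) : G × ZMod n).1 = 0 := congrArg Subtype.val w.2
        rw [hy]
        have he : (⟨((w : gsub n A f m) : G × ZMod n).1, h⟩ : A) = 0 := Subtype.ext h0
        rw [he, map_zero]
      · intro w
        apply Subtype.ext
        apply Subtype.ext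
        have h0 : ((w : gsub n A f m) : G × ZMod n).1 = 0 := congrArg Subtype.val w.2
        exact Prod.ext h0.symm rfl
      · intro y
        exact Subtype.ext rfl
    rw [Nat.card_congr e]
    exact card_torsion_sub n hmn
  calc Nat.card (gsub n A f m)
      = Nat.card ((gsub n A f m) ⧸ π.ker) * Nat.card π.ker :=
        card_eq_card_quotient_mul_card_addSubgroup _
    _ = Nat.card A * m := by
        rw [hker, Nat.card_congr (QuotientAddGroup.quotientKerEquivOfSurjective π hπs).toEquiv]

private lemma gsub_fst (A : AddSubgroup G) (f : A →+ ZMod n) (m : ℕ)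
    (hm : Nat.card f.range * m ∣ n) :
    (gsub n A f m).map (AddMonoidHom.fst G (ZMod n)) = A := by
  ext x
  rw [AddSubgroup.mem_map]
  constructor
  · rintro ⟨⟨x', y⟩, ⟨h, -⟩, rfl⟩
    exact h
  · intro hx
    obtain ⟨y, hy⟩ := gsub_solv n A f m hm ⟨x, hx⟩
    exact ⟨(x, y), ⟨hx, hy⟩, rfl⟩

private lemma gsub_inr (A : AddSubgroup G) (f : A →+ ZMod n) (m : ℕ) :
    (gsub n A f m).comap (AddMonoidHom.inr G (ZMod n)) = tors n m := by
  ext y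
  rw [AddSubgroup.mem_comap, mem_tors]
  constructor
  · rintro ⟨h, hy⟩
    have he : (⟨((AddMonoidHom.inr G (ZMod n)) y).1, h⟩ : A) = 0 := Subtype.ext rfl
    rw [he, map_zero] at hy
    exact hy
  · intro h
    refine ⟨A.zero_mem, ?_⟩
    have he : (⟨((AddMonoidHom.inr G (ZMod n)) y).1, A.zero_mem⟩ : A) = 0 := Subtype.ext rfl
    rw [he, map_zero]
    exact h

private lemma gsub_val {A : AddSubgroup G} {f : A →+ ZMod n} {m : ℕ} {x : G} {y : ZMod n}
    (hmem : (x, y) ∈ gsub n A f m) (hx : x ∈ A) : m • y = f ⟨x, hx⟩ := by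
  obtain ⟨h, hy⟩ := hmem
  exact hy

private lemma gsub_surj_aux (H : AddSubgroup (G × ZMod n)) :
    ∃ (A : AddSubgroup G) (f : A →+ ZMod n),
      H = gsub n A f (Nat.card (H.comap (AddMonoidHom.inr G (ZMod n)))) ∧
      Nat.card f.range * Nat.card (H.comap (AddMonoidHom.inr G (ZMod n)))
        = Nat.card (H.map (AddMonoidHom.snd G (ZMod n))) := by
  set C2 : AddSubgroup (ZMod n) := H.comap (AddMonoidHom.inr G (ZMod n)) with hC2def
  set m : ℕ := Nat.card C2 with hmdef
  set A : AddSubgroup G := H.map (AddMonoidHom.fst G (ZMod n)) with hAdef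
  have hC2tors : C2 = tors n m := eq_tors n C2
  have hC2mem : ∀ y : ZMod n, y ∈ C2 ↔ ((0 : G), y) ∈ H := fun y => Iff.rfl
  have hyex : ∀ x : A, ∃ y, ((x : G), y) ∈ H := by
    rintro ⟨x, hx⟩
    obtain ⟨⟨x', y⟩, hw, h⟩ := AddSubgroup.mem_map.mp hx
    exact ⟨y, by rwa [show x' = x from h] at hw⟩
  choose yrep hyrep using hyex
  have key : ∀ (x : G) (y y' : ZMod n), (x, y) ∈ H → (x, y') ∈ H → m • y = m • y' := by
    intro x y y' h1 h2
    have hdiff : ((0 : G), y - y') ∈ H := by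
      have := H.sub_mem h1 h2
      simpa using this
    have hy2 : y - y' ∈ C2 := (hC2mem _).mpr hdiff
    have h0 : m • (y - y') = 0 := nsmul_card_eq_zero C2 hy2
    rw [smul_sub, sub_eq_zero] at h0
    exact h0
  set f : A →+ ZMod n := AddMonoidHom.mk' (fun x => m • yrep x)
    (by
      intro a b
      have h1 : ((a + b : A) : G) = (a : G) + (b : G) := rfl
      have hab : (((a + b : A) : G), yrep a + yrep b) ∈ H := by
        rw [h1]
        have := H.add_mem (hyrep a) (hyrep b)
        exact this
      have hk := key ((a + b : A) : G) (yrep (a + b)) (yrep a + yrep b) (hyrep (a + b)) hab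
      show m • yrep (a + b) = m • yrep a + m • yrep b
      rw [hk, smul_add]) with hfdef
  have f_spec : ∀ (x : A) (y : ZMod n), ((x : G), y) ∈ H → f x = m • y := by
    intro x y h
    exact key (x : G) (yrep x) y (hyrep x) h
  refine ⟨A, f, ?_, ?_⟩
  · -- H = gsub
    ext ⟨x, y⟩
    rw [mem_gsub]
    constructor
    · intro hxy
      have hx : x ∈ A := AddSubgroup.mem_map.mpr ⟨(x, y), hxy, rfl⟩
      exact ⟨hx, (f_spec ⟨x, hx⟩ y hxy).symm⟩
    · rintro ⟨hx, hy⟩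
      have h1 : ((x : G), yrep ⟨x, hx⟩) ∈ H := hyrep ⟨x, hx⟩
      have h2 : m • y = m • yrep ⟨x, hx⟩ := by
        rw [hy]
        exact (f_spec ⟨x, hx⟩ (yrep ⟨x, hx⟩) h1)
      have h3 : y - yrep ⟨x, hx⟩ ∈ tors n m := by
        rw [mem_tors, smul_sub, h2, sub_self]
      have h4 : ((0 : G), y - yrep ⟨x, hx⟩) ∈ H := (hC2mem _).mp (hC2tors ▸ h3)
      have h5 := H.add_mem h1 h4
      simpa using h5
  · -- card claim
    set C1 : AddSubgroup (ZMod n) := H.map (AddMonoidHom.snd G (ZMod n)) with hC1def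
    have hC2C1 : C2 ≤ C1 := by
      intro y hy
      exact AddSubgroup.mem_map.mpr ⟨((0 : G), y), (hC2mem y).mp hy, rfl⟩
    set ρ : C1 →+ ZMod n := (smulHom n m).comp C1.subtype with hρdef
    have hρval : ∀ y : C1, ρ y = m • (y : ZMod n) := fun y => rfl
    have hrange : ρ.range = f.range := by
      ext c
      rw [AddMonoidHom.mem_range, AddMonoidHom.mem_range]
      constructor
      · rintro ⟨⟨y, hy⟩, h⟩
        obtain ⟨⟨x', y'⟩, hw, hsnd⟩ := AddSubgroup.mem_map.mp hy
        have hy' : y' = y := hsnd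
        rw [hy'] at hw
        have hx' : x' ∈ A := AddSubgroup.mem_map.mpr ⟨(x', y), hw, rfl⟩
        refine ⟨⟨x', hx'⟩, ?_⟩
        rw [f_spec ⟨x', hx'⟩ y hw]
        exact h
      · rintro ⟨x, rfl⟩
        have hyC1 : yrep x ∈ C1 := AddSubgroup.mem_map.mpr ⟨((x : G), yrep x), hyrep x, rfl⟩
        refine ⟨⟨yrep x, hyC1⟩, ?_⟩
        rw [hρval]
        exact (f_spec x (yrep x) (hyrep x)).symm
    have hkerρ : Nat.card ρ.ker = m := by
      have e : ρ.ker ≃ C2 :=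
        { toFun := fun w => ⟨((w : C1) : ZMod n), by
            rw [hC2tors, mem_tors]
            exact w.2⟩
          invFun := fun c => ⟨⟨(c : ZMod n), hC2C1 c.2⟩, by
            show ρ ⟨(c : ZMod n), hC2C1 c.2⟩ = 0
            rw [hρval]
            exact nsmul_card_eq_zero C2 c.2⟩
          left_inv := fun w => by apply Subtype.ext; apply Subtype.ext; rfl
          right_inv := fun c => by apply Subtype.ext; rfl }
      rw [Nat.card_congr e]
    calc Nat.card f.range * m = m * Nat.card f.range := mul_comm _ _
      _ = Nat.card ρ.ker * Nat.card (C1 ⧸ ρ.ker) := by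
          rw [hkerρ, Nat.card_congr (QuotientAddGroup.quotientKerEquivRange ρ).toEquiv, hrange]
      _ = Nat.card C1 := by rw [mul_comm, ← card_eq_card_quotient_mul_card_addSubgroup]

end Goursat
section Cpow

private lemma ncast_cpow_mul (a : ℂ) (x y : ℕ) :
    (((x * y : ℕ) : ℂ)) ^ a = ((x : ℂ)) ^ a * ((y : ℂ)) ^ a := by
  have h := Complex.mul_cpow_ofReal_nonneg (a := (x : ℝ)) (b := (y : ℝ))
    (by positivity) (by positivity) a
  push_cast at h ⊢
  exact h

private lemma ncast_cpow_pow (a : ℂ) (x : ℕ) (j : ℕ) :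
    (((x ^ j : ℕ) : ℂ)) ^ a = (((x : ℂ)) ^ a) ^ j := by
  induction j with
  | zero => simp
  | succ j ih =>
    rw [pow_succ, ncast_cpow_mul a (x ^ j) x, ih, pow_succ]

private lemma cpow_nat_factor {p : ℕ} (hp : (p : ℂ) ≠ 0) (a : ℂ) (N : ℕ) :
    ((p : ℂ) ^ a) ^ N = (p : ℂ) ^ (a * N) := by
  induction N with
  | zero => simp
  | succ N ih =>
    rw [pow_succ, ih, show (a * ((N + 1 : ℕ) : ℂ)) = a * N + a by push_cast; ring,
      Complex.cpow_add _ _ hp]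

end Cpow
section KeyLemma

private lemma key_prod (p ℓ : ℕ) (hp : p.Prime) (G : Type*) [AddCommGroup G] [Fintype G]
    (hexp : ∀ g : G, (p ^ ℓ) • g = 0) (a : ℂ) :
    ((p : ℂ) ^ a - 1) * sigmaA a (G × ZMod (p ^ ℓ))
      = ((p : ℂ) ^ a) ^ (ℓ + 1) * (Nat.card G : ℂ) * sigmaA (a - 1) G
        - sigmaA (a + 1) G := by
  haveI : NeZero (p ^ ℓ) := ⟨pow_ne_zero ℓ hp.ne_zero⟩
  set n := p ^ ℓ with hn
  set x := (p : ℂ) ^ a with hx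
  haveI : Fintype (AddSubgroup (G × ZMod n)) := Fintype.ofFinite _
  haveI : Fintype (AddSubgroup G) := Fintype.ofFinite _
  letI instF : ∀ A : AddSubgroup G, Fintype (A →+ ZMod n) := fun A => Fintype.ofFinite _
  letI instJfin : ∀ (d : ℕ), Finite {j : ℕ // d ∣ p ^ j ∧ j ≤ ℓ} := fun d =>
    Finite.of_injective (fun j => (⟨j.1, Nat.lt_succ_of_le j.2.2⟩ : Fin (ℓ + 1)))
      (fun u v h => Subtype.ext (by simpa using congrArg Fin.val h))
  letI instJ : ∀ (d : ℕ), Fintype {j : ℕ // d ∣ p ^ j ∧ j ≤ ℓ} := fun d =>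
    Fintype.ofFinite _
  -- the index type
  -- basic facts
  have hdvd_range : ∀ (A : AddSubgroup G) (f : A →+ ZMod n), Nat.card f.range ∣ n := by
    intro A f
    have := f.range.card_addSubgroup_dvd_card
    rwa [Nat.card_zmod] at this
  have hrange_pos : ∀ (A : AddSubgroup G) (f : A →+ ZMod n), Nat.card f.range ≠ 0 :=
    fun A f => Nat.card_pos.ne'
  have hAcard : ∀ (A : AddSubgroup G) (f : A →+ ZMod n),
      Nat.card A = Nat.card f.ker * Nat.card f.range := by
    intro A f
    have e := card_eq_card_quotient_mul_card_addSubgroup f.ker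
    rw [Nat.card_congr (QuotientAddGroup.quotientKerEquivRange f).toEquiv] at e
    rw [e]
    exact mul_comm _ _
  have hmdvd : ∀ (A : AddSubgroup G) (f : A →+ ZMod n) (j : ℕ),
      Nat.card f.range ∣ p ^ j → j ≤ ℓ →
      Nat.card f.range * (p ^ j / Nat.card f.range) ∣ n := by
    intro A f j hj1 hj2
    rw [Nat.mul_div_cancel' hj1, hn]
    exact pow_dvd_pow p hj2
  -- the bijection
  set Ψ : (Σ (A : AddSubgroup G) (f : A →+ ZMod n), {j : ℕ // Nat.card f.range ∣ p ^ j ∧ j ≤ ℓ})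
      → AddSubgroup (G × ZMod n) :=
    fun t => gsub n t.1 t.2.1 (p ^ (t.2.2 : ℕ) / Nat.card t.2.1.range) with hΨ
  have hΨbij : Function.Bijective Ψ := by
    constructor
    · rintro ⟨A, f, ⟨j, hj1, hj2⟩⟩ ⟨A', f', ⟨j', hj1', hj2'⟩⟩ h
      simp only [hΨ] at h
      have hm : Nat.card f.range * (p ^ j / Nat.card f.range) ∣ n := hmdvd A f j hj1 hj2
      have hm' : Nat.card f'.range * (p ^ j' / Nat.card f'.range) ∣ n := hmdvd A' f' j' hj1' hj2'
      have hAA : A = A' := by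
        rw [← gsub_fst n A f _ hm, ← gsub_fst n A' f' _ hm', h]
      subst hAA
      -- m = m'
      have hmm : p ^ j / Nat.card f.range = p ^ j' / Nat.card f'.range := by
        have h1 := gsub_inr n A f (p ^ j / Nat.card f.range)
        have h2 := gsub_inr n A f' (p ^ j' / Nat.card f'.range)
        rw [h] at h1
        have h3 : tors n (p ^ j / Nat.card f.range) = tors n (p ^ j' / Nat.card f'.range) := by
          rw [← h1, ← h2]
        have hc1 := card_tors n (dvd_trans (Dvd.intro_left _ rfl) hm)
        have hc2 := card_tors n (dvd_trans (Dvd.intro_left _ rfl) hm')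
        rw [← hc1, ← hc2, h3]
      have hff : f = f' := by
        ext z
        obtain ⟨y, hy⟩ := gsub_solv n A f _ hm z
        have hmem : ((z : G), y) ∈ gsub n A f (p ^ j / Nat.card f.range) := by
          rw [mem_gsub]
          exact ⟨z.2, by rwa [Subtype.coe_eta]⟩
        have hmem' : ((z : G), y) ∈ gsub n A f' (p ^ j' / Nat.card f'.range) := by
          rw [← h]
          exact hmem
        have e1 := gsub_val n hmem z.2
        have e2 := gsub_val n hmem' z.2
        rw [Subtype.coe_eta] at e1 e2
        rw [← e1, ← e2, hmm]
      subst hff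
      have hjj : j = j' := by
        have e1 : p ^ j = p ^ j' := by
          rw [← Nat.mul_div_cancel' hj1, ← Nat.mul_div_cancel' hj1', hmm]
        exact Nat.pow_right_injective hp.two_le e1
      subst hjj
      rfl
    · intro H
      obtain ⟨A, f, hH, hcard⟩ := gsub_surj_aux n H
      have hdm : Nat.card f.range * Nat.card (H.comap (AddMonoidHom.inr G (ZMod n))) ∣ n := by
        rw [hcard]
        have := (H.map (AddMonoidHom.snd G (ZMod n))).card_addSubgroup_dvd_card
        rwa [Nat.card_zmod] at this
      obtain ⟨j, hjle, hjeq⟩ := (Nat.dvd_prime_pow hp).mp hdm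
      have hj1 : Nat.card f.range ∣ p ^ j := by
        rw [← hjeq]
        exact Dvd.intro _ rfl
      refine ⟨⟨A, f, ⟨j, hj1, hjle⟩⟩, ?_⟩
      show gsub n A f (p ^ j / Nat.card f.range) = H
      have hq : p ^ j / Nat.card f.range = Nat.card (H.comap (AddMonoidHom.inr G (ZMod n))) := by
        rw [← hjeq, Nat.mul_div_cancel_left _ (Nat.pos_of_ne_zero (hrange_pos A f))]
      rw [hq, ← hH]
  -- the cardinality of Ψ t
  have hΨcard : ∀ (A : AddSubgroup G) (f : A →+ ZMod n)
      (j : {j : ℕ // Nat.card f.range ∣ p ^ j ∧ j ≤ ℓ}),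
      Nat.card (Ψ ⟨A, f, j⟩) = Nat.card f.ker * p ^ (j : ℕ) := by
    rintro A f ⟨j, hj1, hj2⟩
    show Nat.card (gsub n A f (p ^ j / Nat.card f.range)) = _
    rw [card_gsub n A f _ (hmdvd A f j hj1 hj2), hAcard A f, mul_assoc,
      Nat.mul_div_cancel' hj1]
  -- step 1 : reindex the finsum
  have step1 : sigmaA a (G × ZMod n)
      = ∑ A : AddSubgroup G, ∑ f : A →+ ZMod n,
          ∑ j : {j : ℕ // Nat.card f.range ∣ p ^ j ∧ j ≤ ℓ},
            (Nat.card f.ker : ℂ) ^ a * x ^ (j : ℕ) := by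
    rw [sigmaA, finsum_eq_sum_of_fintype]
    rw [← Fintype.sum_bijective Ψ hΨbij _ _ (fun t => rfl)]
    rw [← Finset.univ_sigma_univ, Finset.sum_sigma]
    refine Finset.sum_congr rfl (fun A _ => ?_)
    rw [← Finset.univ_sigma_univ, Finset.sum_sigma]
    refine Finset.sum_congr rfl (fun f _ => ?_)
    refine Finset.sum_congr rfl (fun j _ => ?_)
    rw [hΨcard A f j, ncast_cpow_mul, ncast_cpow_pow]
  -- step 2 : per (A, f) telescoping
  have step2 : ∀ (A : AddSubgroup G) (f : A →+ ZMod n),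
      (x - 1) * ∑ j : {j : ℕ // Nat.card f.range ∣ p ^ j ∧ j ≤ ℓ},
          (Nat.card f.ker : ℂ) ^ a * x ^ (j : ℕ)
        = (Nat.card f.ker : ℂ) ^ a * x ^ (ℓ + 1) - (Nat.card A : ℂ) ^ a := by
    intro A f
    obtain ⟨k, hkle, hkeq⟩ := (Nat.dvd_prime_pow hp).mp (hdvd_range A f)
    have hiff : ∀ j : ℕ, j ∈ Finset.Icc k ℓ ↔ (Nat.card f.range ∣ p ^ j ∧ j ≤ ℓ) := by
      intro j
      rw [Finset.mem_Icc, hkeq, Nat.pow_dvd_pow_iff_le_right hp.one_lt]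
    have hsub : ∑ j : {j : ℕ // Nat.card f.range ∣ p ^ j ∧ j ≤ ℓ},
        (Nat.card f.ker : ℂ) ^ a * x ^ (j : ℕ)
        = ∑ j ∈ Finset.Icc k ℓ, (Nat.card f.ker : ℂ) ^ a * x ^ j :=
      (Finset.sum_subtype (Finset.Icc k ℓ) hiff
        (fun j => (Nat.card f.ker : ℂ) ^ a * x ^ j)).symm
    rw [hsub, ← Finset.mul_sum, ← Finset.Ico_add_one_right_eq_Icc]
    have hgeom := geom_sum_Ico_mul x (show k ≤ ℓ + 1 by omega)
    calc (x - 1) * ((Nat.card f.ker : ℂ) ^ a * ∑ j ∈ Finset.Ico k (ℓ + 1), x ^ j)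
        = (Nat.card f.ker : ℂ) ^ a * ((∑ j ∈ Finset.Ico k (ℓ + 1), x ^ j) * (x - 1)) := by ring
      _ = (Nat.card f.ker : ℂ) ^ a * (x ^ (ℓ + 1) - x ^ k) := by rw [hgeom]
      _ = (Nat.card f.ker : ℂ) ^ a * x ^ (ℓ + 1) - (Nat.card A : ℂ) ^ a := by
          have hxk : x ^ k = (Nat.card f.range : ℂ) ^ a := by
            rw [hx, ← ncast_cpow_pow, ← hkeq]
          rw [hxk, mul_sub, ← ncast_cpow_mul, ← hAcard A f]
  -- step 3 : multiply out
  have step3 : ((p : ℂ) ^ a - 1) * sigmaA a (G × ZMod n)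
      = (∑ A : AddSubgroup G, ∑ f : A →+ ZMod n, (Nat.card f.ker : ℂ) ^ a) * x ^ (ℓ + 1)
        - ∑ A : AddSubgroup G, ∑ f : A →+ ZMod n, (Nat.card A : ℂ) ^ a := by
    rw [step1, ← hx, Finset.mul_sum]
    rw [Finset.sum_mul, ← Finset.sum_sub_distrib]
    refine Finset.sum_congr rfl (fun A _ => ?_)
    rw [Finset.mul_sum, Finset.sum_mul, ← Finset.sum_sub_distrib]
    refine Finset.sum_congr rfl (fun f _ => ?_)
    rw [step2 A f]
  -- term U
  have termU : ∑ A : AddSubgroup G, ∑ f : A →+ ZMod n, (Nat.card A : ℂ) ^ a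
      = sigmaA (a + 1) G := by
    rw [sigmaA, finsum_eq_sum_of_fintype]
    refine Finset.sum_congr rfl (fun A _ => ?_)
    rw [Finset.sum_const, Finset.card_univ, nsmul_eq_mul]
    have hcardhom : (Fintype.card (A →+ ZMod n) : ℂ) = (Nat.card A : ℂ) := by
      rw [← Nat.card_eq_fintype_card]
      norm_cast
      apply card_hom_eq n
      intro z
      have h1 : ((n • z : A) : G) = n • (z : G) := rfl
      have h2 : n • (z : G) = 0 := hexp (z : G)
      exact Subtype.ext (h1.trans h2)
    rw [hcardhom]
    have hne : (Nat.card A : ℂ) ≠ 0 := by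
      simp only [ne_eq, Nat.cast_eq_zero]
      exact Nat.card_pos.ne'
    rw [Complex.cpow_add _ _ hne, Complex.cpow_one]
    ring
  -- term T
  have termT : ∑ A : AddSubgroup G, ∑ f : A →+ ZMod n, (Nat.card f.ker : ℂ) ^ a
      = (Nat.card G : ℂ) * sigmaA (a - 1) G := by
    have hglue : ∑ A : AddSubgroup G, ∑ f : A →+ ZMod n, (Nat.card f.ker : ℂ) ^ a
        = ∑ t : Σ A : AddSubgroup G, (A →+ ZMod n), (Nat.card (kermap n t) : ℂ) ^ a := by
      rw [← Finset.univ_sigma_univ, Finset.sum_sigma]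
      refine Finset.sum_congr rfl (fun A _ => Finset.sum_congr rfl (fun f _ => ?_))
      have : Nat.card f.ker = Nat.card (kermap n ⟨A, f⟩) :=
        Nat.card_congr (AddSubgroup.equivMapOfInjective f.ker A.subtype
          A.subtype_injective).toEquiv
      rw [this]
    rw [hglue]
    rw [← Finset.sum_fiberwise Finset.univ (kermap n)
      (fun t => (Nat.card (kermap n t) : ℂ) ^ a)]
    have hfib : ∀ B₀ : AddSubgroup G,
        ∑ t ∈ Finset.univ.filter (fun t => kermap n t = B₀),
          (Nat.card (kermap n t) : ℂ) ^ a
        = (Nat.card (G ⧸ B₀) : ℂ) * (Nat.card B₀ : ℂ) ^ a := by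
      intro B₀
      have hcongr : ∑ t ∈ Finset.univ.filter (fun t => kermap n t = B₀),
            (Nat.card (kermap n t) : ℂ) ^ a
          = ∑ _t ∈ Finset.univ.filter (fun t => kermap n t = B₀), (Nat.card B₀ : ℂ) ^ a :=
        Finset.sum_congr rfl (fun t ht => by rw [(Finset.mem_filter.mp ht).2])
      rw [hcongr, Finset.sum_const, nsmul_eq_mul]
      congr 1
      have h1 : (Finset.univ.filter (fun t => kermap n t = B₀)).card
          = Nat.card {t : Σ A : AddSubgroup G, (A →+ ZMod n) // kermap n t = B₀} := by
        rw [Nat.card_eq_fintype_card, Fintype.card_subtype]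
      rw [h1, card_fiber n hexp B₀]
    rw [Finset.sum_congr rfl (fun B₀ _ => hfib B₀)]
    rw [sigmaA, finsum_eq_sum_of_fintype, Finset.mul_sum]
    refine Finset.sum_congr rfl (fun B₀ _ => ?_)
    have hfac : (Nat.card G : ℂ) = (Nat.card (G ⧸ B₀) : ℂ) * (Nat.card B₀ : ℂ) := by
      rw [← Nat.cast_mul]
      exact_mod_cast congrArg Nat.cast (card_eq_card_quotient_mul_card_addSubgroup B₀)
    have hne : (Nat.card B₀ : ℂ) ≠ 0 := by
      simp only [ne_eq, Nat.cast_eq_zero]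
      exact Nat.card_pos.ne'
    rw [hfac]
    have hsplit : (Nat.card B₀ : ℂ) ^ a = (Nat.card B₀ : ℂ) ^ (a - 1) * (Nat.card B₀ : ℂ) := by
      nth_rewrite 1 [show a = (a - 1) + 1 by ring]
      rw [Complex.cpow_add _ _ hne, Complex.cpow_one]
    rw [hsplit]
    ring
  rw [step3, termU, termT]
  ring

end KeyLemma
section Transfer

private lemma sigmaA_congr {F F' : Type*} [AddCommGroup F] [AddCommGroup F'] (e : F ≃+ F')
    (a : ℂ) : sigmaA a F = sigmaA a F' := by
  rw [sigmaA, sigmaA]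
  have hinv1 : ∀ H : AddSubgroup F, (H.map e.toAddMonoidHom).map e.symm.toAddMonoidHom = H := by
    intro H
    ext x
    rw [AddSubgroup.map_map, AddSubgroup.mem_map]
    constructor
    · rintro ⟨y, hy, hxy⟩
      have h2 : e.symm (e y) = x := hxy
      rw [e.symm_apply_apply] at h2
      rwa [← h2]
    · intro hx
      exact ⟨x, hx, by simp⟩
  have hinv2 : ∀ K : AddSubgroup F', (K.map e.symm.toAddMonoidHom).map e.toAddMonoidHom = K := by
    intro K
    ext x
    rw [AddSubgroup.map_map, AddSubgroup.mem_map]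
    constructor
    · rintro ⟨y, hy, hxy⟩
      have h2 : e (e.symm y) = x := hxy
      rw [e.apply_symm_apply] at h2
      rwa [← h2]
    · intro hx
      exact ⟨x, hx, by simp⟩
  refine finsum_eq_of_bijective (fun H : AddSubgroup F => H.map e.toAddMonoidHom)
    (Function.bijective_iff_has_inverse.mpr
      ⟨fun K => K.map e.symm.toAddMonoidHom, hinv1, hinv2⟩) ?_
  intro H
  have : Nat.card H = Nat.card (H.map e.toAddMonoidHom) :=
    Nat.card_congr (AddEquiv.addSubgroupMap e H).toEquiv
  rw [this]

private noncomputable def zmultEquiv {F : Type*} [AddCommGroup F] (e : F) (N : ℕ) [NeZero N]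
    (he : addOrderOf e = N) : AddSubgroup.zmultiples e ≃+ ZMod N := by
  have h0 : (zmultiplesHom (AddSubgroup.zmultiples e) ⟨e, AddSubgroup.mem_zmultiples e⟩)
      ((N : ℕ) : ℤ) = 0 := by
    apply Subtype.ext
    show ((N : ℕ) : ℤ) • e = 0
    rw [natCast_zsmul, ← he]
    exact addOrderOf_nsmul_eq_zero e
  set hΦ : ZMod N →+ AddSubgroup.zmultiples e := ZMod.lift N ⟨_, h0⟩ with hΦdef
  have hsurj : Function.Surjective hΦ := by
    rintro ⟨z, hz⟩
    obtain ⟨t, ht⟩ := AddSubgroup.mem_zmultiples_iff.mp hz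
    refine ⟨((t : ℤ) : ZMod N), ?_⟩
    rw [hΦdef, ZMod.lift_coe]
    apply Subtype.ext
    show t • e = z
    exact ht
  have hbij : Function.Bijective hΦ := by
    rw [Nat.bijective_iff_surjective_and_card]
    refine ⟨hsurj, ?_⟩
    rw [Nat.card_zmod, Nat.card_zmultiples, he]
  exact (AddEquiv.ofBijective hΦ hbij).symm

end Transfer
/-- main recursion: let `Fr` be a finite abelian `p`-group of rank `≥ 1`
(i.e. nontrivial) and exponent `p^ℓ`, let `e` be an element of order `p^ℓ`, and let
`Fr1` be a subgroup with `Fr = Fr1 ⊕ ℤe` (an internal direct sum, i.e. `Fr1` and the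
cyclic subgroup generated by `e` are complementary). Then for every complex `a`:
`(p^a - 1) σ_a(Fr) = p^{aℓ+a} |Fr1| σ_{a-1}(Fr1) - σ_{a+1}(Fr1)`. -/
theorem sigmaA_main_recursion (p ℓ : ℕ) (hp : p.Prime)
    (Fr : Type*) [AddCommGroup Fr] [Fintype Fr] [Nontrivial Fr]
    (hexp : AddMonoid.exponent Fr = p ^ ℓ)
    (e : Fr) (he : addOrderOf e = p ^ ℓ)
    (Fr1 : AddSubgroup Fr) (hcompl : IsCompl Fr1 (AddSubgroup.zmultiples e))
    (a : ℂ) :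
    ((p : ℂ) ^ a - 1) * sigmaA a Fr
      = (p : ℂ) ^ (a * ℓ + a) * (Nat.card Fr1 : ℂ) * sigmaA (a - 1) Fr1
        - sigmaA (a + 1) Fr1 := by
  haveI : NeZero (p ^ ℓ) := ⟨pow_ne_zero ℓ hp.ne_zero⟩
  haveI : Fintype Fr1 := Fintype.ofFinite _
  -- the isomorphism Fr ≃+ Fr1 × ZMod (p^ℓ)
  have hcompl' : IsCompl (AddSubgroup.toIntSubmodule Fr1)
      (AddSubgroup.toIntSubmodule (AddSubgroup.zmultiples e)) :=
    (AddSubgroup.toIntSubmodule (M := Fr)).isCompl hcompl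
  have eqv0 : Fr ≃+ (AddSubgroup.toIntSubmodule Fr1 ×
      AddSubgroup.toIntSubmodule (AddSubgroup.zmultiples e)) :=
    (Submodule.prodEquivOfIsCompl _ _ hcompl').symm.toAddEquiv
  have idE1 : (AddSubgroup.toIntSubmodule Fr1 : Submodule ℤ Fr) ≃+ Fr1 :=
    { toFun := fun x => ⟨x.1, x.2⟩
      invFun := fun x => ⟨x.1, x.2⟩
      left_inv := fun x => rfl
      right_inv := fun x => rfl
      map_add' := fun x y => rfl }
  have idE2 : (AddSubgroup.toIntSubmodule (AddSubgroup.zmultiples e) : Submodule ℤ Fr)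
      ≃+ AddSubgroup.zmultiples e :=
    { toFun := fun x => ⟨x.1, x.2⟩
      invFun := fun x => ⟨x.1, x.2⟩
      left_inv := fun x => rfl
      right_inv := fun x => rfl
      map_add' := fun x y => rfl }
  have E : Fr ≃+ (Fr1 × ZMod (p ^ ℓ)) :=
    eqv0.trans (AddEquiv.prodCongr idE1 (idE2.trans (zmultEquiv e (p ^ ℓ) he)))
  -- exponent of Fr1
  have hexp1 : ∀ z : Fr1, (p ^ ℓ) • z = 0 := by
    intro z
    apply Subtype.ext
    show (p ^ ℓ) • (z : Fr) = 0
    rw [← hexp]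
    exact AddMonoid.exponent_nsmul_eq_zero (z : Fr)
  have key := key_prod p ℓ hp Fr1 hexp1 a
  rw [sigmaA_congr E a, key]
  have hpne : ((p : ℂ)) ≠ 0 := by
    simp only [ne_eq, Nat.cast_eq_zero]
    exact hp.ne_zero
  rw [cpow_nat_factor hpne a (ℓ + 1)]
  have : a * ((ℓ + 1 : ℕ) : ℂ) = a * ℓ + a := by push_cast; ring
  rw [this]
end

section
/- Let $p$ be a prime, let $F_r$ be a finite abelian $p$-group of rank $r \ge 1$ and exponent $p^\ell$, let $e_\ell \in F_r$ be an element of order $p^\ell$, and let $F_{r-1}$ be a subgroup such that $F_r = F_{r-1} \oplus \mathbb{Z}e_\ell$. Set $G_r = F_{r-1} \oplus \mathbb{Z}\,p e_\ell$ (the internal direct sum of $F_{r-1}$ with the cyclic subgroup generated by $p e_\ell$). Then for every complex number $a$: $\sigma_a(F_r) = p^a\,\sigma_a(G_r) + \sigma_{a+1}(F_{r-1})$. -/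
open scoped Classical

open AddSubgroup


section Proj
variable {Fr : Type*} [AddCommGroup Fr] (Fr1 E : AddSubgroup Fr) (h : IsCompl Fr1 E)

/-- projection onto `E` along `Fr1`. -/
noncomputable def pr2 : Fr →+ Fr :=
  ((AddSubgroup.toIntSubmodule E).subtype.comp
    (Submodule.projectionOnto (AddSubgroup.toIntSubmodule E)
      (AddSubgroup.toIntSubmodule Fr1)
      ((AddSubgroup.toIntSubmodule : AddSubgroup Fr ≃o Submodule ℤ Fr).isCompl h.symm))).toAddMonoidHom

lemma pr2_mem (x : Fr) : pr2 Fr1 E h x ∈ E := by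
  have := ((Submodule.projectionOnto (AddSubgroup.toIntSubmodule E)
      (AddSubgroup.toIntSubmodule Fr1)
      ((AddSubgroup.toIntSubmodule : AddSubgroup Fr ≃o Submodule ℤ Fr).isCompl h.symm)) x).2
  exact this

lemma pr2_apply_mem_left (x : Fr) (hx : x ∈ Fr1) : pr2 Fr1 E h x = 0 := by
  have : (⟨x, hx⟩ : AddSubgroup.toIntSubmodule Fr1) = ⟨x, hx⟩ := rfl
  simp only [pr2, LinearMap.toAddMonoidHom_coe, LinearMap.coe_comp, Function.comp_apply,
    Submodule.coe_subtype]
  rw [Submodule.projectionOnto_apply_of_mem_right _ hx, ZeroMemClass.coe_zero]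

lemma pr2_apply_mem_right (x : Fr) (hx : x ∈ E) : pr2 Fr1 E h x = x := by
  simp only [pr2, LinearMap.toAddMonoidHom_coe, LinearMap.coe_comp, Function.comp_apply,
    Submodule.coe_subtype]
  have := Submodule.projectionOnto_apply_left
    ((AddSubgroup.toIntSubmodule : AddSubgroup Fr ≃o Submodule ℤ Fr).isCompl h.symm)
    (⟨x, hx⟩ : AddSubgroup.toIntSubmodule E)
  rw [this]

lemma sub_pr2_mem (x : Fr) : x - pr2 Fr1 E h x ∈ Fr1 := by
  have hx : x ∈ Fr1 ⊔ E := by rw [h.sup_eq_top]; trivial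
  obtain ⟨y, hy, z, hz, rfl⟩ := AddSubgroup.mem_sup.mp hx
  rw [map_add, pr2_apply_mem_left _ _ _ y hy, pr2_apply_mem_right _ _ _ z hz, zero_add,
    add_sub_cancel_right]
  exact hy

end Proj

open scoped Classical


lemma natmul_cpow (m n : ℕ) (a : ℂ) :
    ((m * n : ℕ) : ℂ) ^ a = (m : ℂ) ^ a * (n : ℂ) ^ a := by
  have := Complex.mul_cpow_ofReal_nonneg (Nat.cast_nonneg (α := ℝ) m)
    (Nat.cast_nonneg (α := ℝ) n) a
  push_cast at this ⊢
  exact this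

lemma card_addMonoidHom_eq (H E : Type*) [AddCommGroup H] [Finite H] [AddCommGroup E]
    (n : ℕ) (hn : n ≠ 0) (hE : IsAddCyclic E) (hcard : Nat.card E = n)
    (hexp : ∀ x : H, n • x = 0) : Nat.card (H →+ E) = Nat.card H := by
  haveI : NeZero n := ⟨hn⟩
  haveI : Finite E := Nat.finite_of_card_ne_zero (by rw [hcard]; exact hn)
  haveI : IsCyclic (Multiplicative E) := isCyclic_multiplicative
  have hpow : ∀ x : Multiplicative H, x ^ n = 1 := by
    intro x
    rw [← ofAdd_toAdd x, ← ofAdd_nsmul, hexp, ofAdd_zero]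
  -- roots of unity in ℂ
  have hcardR : Nat.card (rootsOfUnity n ℂ) = n :=
    HasEnoughRootsOfUnity.natCard_rootsOfUnity ℂ n
  let e2 : Multiplicative E ≃* rootsOfUnity n ℂ :=
    mulEquivOfCyclicCardEq (by rw [hcardR]; exact hcard)
  let e3 : (Multiplicative H →* Multiplicative E) ≃* (Multiplicative H →* rootsOfUnity n ℂ) :=
    MulEquiv.monoidHomCongrRight (M := Multiplicative H) e2
  let e4 : (Multiplicative H →* rootsOfUnity n ℂ) ≃ (Multiplicative H →* ℂˣ) :=
    { toFun := fun φ => (rootsOfUnity n ℂ).subtype.comp φ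
      invFun := fun ψ => ψ.codRestrict (rootsOfUnity n ℂ) (fun x => by
        rw [mem_rootsOfUnity, ← map_pow, hpow, map_one])
      left_inv := fun φ => by ext x; rfl
      right_inv := fun ψ => by ext x; rfl }
  have hdvd : Monoid.exponent (Multiplicative H) ∣ n :=
    Monoid.exponent_dvd_of_forall_pow_eq_one hpow
  haveI : HasEnoughRootsOfUnity ℂ (Monoid.exponent (Multiplicative H)) :=
    HasEnoughRootsOfUnity.of_dvd ℂ hdvd
  obtain ⟨e5⟩ := CommGroup.monoidHom_mulEquiv_of_hasEnoughRootsOfUnity (Multiplicative H) ℂ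
  calc Nat.card (H →+ E) = Nat.card (Multiplicative H →* Multiplicative E) :=
        Nat.card_congr AddMonoidHom.toMultiplicative
    _ = Nat.card (Multiplicative H →* rootsOfUnity n ℂ) := Nat.card_congr e3.toEquiv
    _ = Nat.card (Multiplicative H →* ℂˣ) := Nat.card_congr e4
    _ = Nat.card (Multiplicative H) := Nat.card_congr e5.toEquiv
    _ = Nat.card H := rfl


/-- let `Fr` be a finite abelian `p`-group of rank `≥ 1` (i.e. nontrivial)
and exponent `p^ℓ`, let `e` be an element of order `p^ℓ`, let `Fr1` be a subgroup with
`Fr = Fr1 ⊕ ℤe`, and set `Gr = Fr1 ⊕ ℤ(p•e)` (the subgroup generated by `Fr1` and `p•e`,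
the sum being direct automatically). Then for every complex `a`:
`σ_a(Fr) = p^a σ_a(Gr) + σ_{a+1}(Fr1)`. -/
theorem sigmaA_recursion_one (p ℓ : ℕ) (hp : p.Prime)
    (Fr : Type*) [AddCommGroup Fr] [Fintype Fr] [Nontrivial Fr]
    (hexp : AddMonoid.exponent Fr = p ^ ℓ)
    (e : Fr) (he : addOrderOf e = p ^ ℓ)
    (Fr1 : AddSubgroup Fr) (hcompl : IsCompl Fr1 (AddSubgroup.zmultiples e))
    (Gr : AddSubgroup Fr) (hGr : Gr = Fr1 ⊔ AddSubgroup.zmultiples (p • e))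
    (a : ℂ) :
    sigmaA a Fr = (p : ℂ) ^ a * sigmaA a Gr + sigmaA (a + 1) Fr1 := by
  set E : AddSubgroup Fr := AddSubgroup.zmultiples e with hE
  have hp1 : 1 < p := hp.one_lt
  -- ℓ ≥ 1
  have hl : 1 ≤ ℓ := by
    by_contra hl
    push_neg at hl
    interval_cases ℓ
    · rw [pow_zero] at hexp
      obtain ⟨x, hx⟩ := exists_ne (0 : Fr)
      have h1 := AddMonoid.exponent_nsmul_eq_zero x
      rw [hexp] at h1
      exact hx (by simpa using h1)
  have hkill : ∀ x : Fr, (p ^ ℓ) • x = 0 := fun x =>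
    hexp ▸ AddMonoid.exponent_nsmul_eq_zero x
  set c : Fr := (p ^ (ℓ - 1)) • e with hc
  have hce : c ∈ E := nsmul_mem (mem_zmultiples e) _
  have hordc : addOrderOf c = p := by
    rw [hc, addOrderOf_nsmul, he, Nat.gcd_eq_right (pow_dvd_pow p (Nat.sub_le ℓ 1)),
      Nat.pow_div (Nat.sub_le ℓ 1) hp.pos, Nat.sub_sub_self hl, pow_one]
  have hpc : p • c = 0 := by
    rw [hc, smul_smul, ← pow_succ', Nat.sub_add_cancel hl]
    exact hkill e
  have hc0 : c ≠ 0 := by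
    intro h0
    rw [h0, addOrderOf_zero] at hordc
    omega
  -- torsion of E
  have hEtor : ∀ y ∈ E, p • y = 0 → y ∈ zmultiples c := by
    intro y hy hpy
    obtain ⟨n, rfl⟩ := AddSubgroup.mem_zmultiples_iff.mp hy
    have h1 : ((p : ℤ) * n) • e = 0 := by
      rw [mul_smul, natCast_zsmul]
      exact hpy
    have h2 : ((p : ℤ) ^ ℓ) ∣ (p : ℤ) * n := by
      have := addOrderOf_dvd_iff_zsmul_eq_zero.mpr h1
      rwa [he, Nat.cast_pow] at this
    have h3 : ((p : ℤ) ^ (ℓ - 1)) ∣ n := by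
      rcases h2 with ⟨t, ht⟩
      refine ⟨t, ?_⟩
      have hpow : (p : ℤ) ^ ℓ = (p : ℤ) * (p : ℤ) ^ (ℓ - 1) := by
        rw [← pow_succ', Nat.sub_add_cancel hl]
      rw [hpow, mul_assoc] at ht
      have hpne : (p : ℤ) ≠ 0 := by exact_mod_cast hp.pos.ne'
      exact mul_left_cancel₀ hpne ht
    rcases h3 with ⟨t, rfl⟩
    rw [AddSubgroup.mem_zmultiples_iff]
    refine ⟨t, ?_⟩
    rw [hc, mul_smul, ← natCast_zsmul e (p ^ (ℓ-1))]
    rw [smul_comm]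
    norm_cast
  -- projections
  set π2 : Fr →+ Fr := pr2 Fr1 E hcompl with hπ2
  have hmem2 : ∀ x, π2 x ∈ E := pr2_mem Fr1 E hcompl
  have hmem1 : ∀ x, x - π2 x ∈ Fr1 := sub_pr2_mem Fr1 E hcompl
  have hπ2l : ∀ x ∈ Fr1, π2 x = 0 := fun x hx => pr2_apply_mem_left Fr1 E hcompl x hx
  have hπ2r : ∀ x ∈ E, π2 x = x := fun x hx => pr2_apply_mem_right Fr1 E hcompl x hx
  -- the endomorphism ψ
  set ψ : Fr →+ Fr := (AddMonoidHom.id Fr - π2) + p • π2 with hψdef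
  have hψval : ∀ x, ψ x = (x - π2 x) + p • π2 x := fun x => rfl
  have hψ1 : ∀ x ∈ Fr1, ψ x = x := by
    intro x hx; rw [hψval, hπ2l x hx]; simp
  have hψe : ψ e = p • e := by
    rw [hψval, hπ2r e (mem_zmultiples e)]; simp
  have hψc : ψ c = 0 := by
    rw [hψval, hπ2r c hce]; simpa using hpc
  have hker : ψ.ker = zmultiples c := by
    apply le_antisymm
    · intro x hx
      have hx0 : (x - π2 x) + p • π2 x = 0 := hx
      have ha : x - π2 x ∈ Fr1 := hmem1 x
      have hb : p • π2 x ∈ E := nsmul_mem (hmem2 x) p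
      have hab : x - π2 x = -(p • π2 x) := by linear_combination (norm := abel) hx0
      have hmem : x - π2 x ∈ Fr1 ⊓ E :=
        AddSubgroup.mem_inf.mpr ⟨ha, by rw [hab]; exact neg_mem hb⟩
      rw [hcompl.inf_eq_bot] at hmem
      have h1 : x = π2 x := by
        have := (AddSubgroup.mem_bot).mp hmem
        linear_combination (norm := abel) this
      have h2 : p • x = 0 := by
        have : p • π2 x = 0 := by
          have := (AddSubgroup.mem_bot).mp hmem
          rw [this] at hab
          simpa using hab.symm
        rw [h1]; exact this
      exact hEtor x (h1 ▸ hmem2 x) h2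
    · rw [zmultiples_le]
      exact hψc
  have hrange : Gr ≤ ψ.range := by
    rw [hGr]
    apply sup_le
    · intro x hx
      exact ⟨x, hψ1 x hx⟩
    · rw [zmultiples_le]
      exact ⟨e, hψe⟩
  have hψGr : ∀ K : AddSubgroup Fr, AddSubgroup.map ψ K ≤ Gr := by
    intro K
    rintro _ ⟨x, -, rfl⟩
    rw [hGr, hψval]
    have h1 : x - π2 x ∈ Fr1 := hmem1 x
    obtain ⟨n, hn⟩ := AddSubgroup.mem_zmultiples_iff.mp (hmem2 x)
    have h2 : p • π2 x ∈ zmultiples (p • e) := by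
      rw [← hn, smul_comm]
      exact zsmul_mem (mem_zmultiples (p • e)) n
    exact AddSubgroup.mem_sup.mpr ⟨_, h1, _, h2, rfl⟩
  -- dichotomy
  have hdich : ∀ K : AddSubgroup Fr, c ∉ K → K ⊓ E = ⊥ := by
    intro K hcK
    rw [eq_bot_iff]
    intro x hx
    rw [AddSubgroup.mem_bot]
    by_contra hx0
    apply hcK
    obtain ⟨hxK, hxE⟩ := hx
    -- order of x is a nontrivial power of p
    have hdvd : addOrderOf x ∣ p ^ ℓ := addOrderOf_dvd_of_nsmul_eq_zero (hkill x)
    obtain ⟨s, hsle, hs⟩ := (Nat.dvd_prime_pow hp).mp hdvd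
    have hs0 : s ≠ 0 := by
      intro h0
      rw [h0, pow_zero] at hs
      exact hx0 (by
        have := addOrderOf_nsmul_eq_zero x
        rwa [hs, one_nsmul] at this)
    set y : Fr := (p ^ (s - 1)) • x with hy
    have hyK : y ∈ K := nsmul_mem hxK _
    have hyE : y ∈ E := nsmul_mem hxE _
    have hpy : p • y = 0 := by
      rw [hy, smul_smul, ← pow_succ', Nat.sub_add_cancel (Nat.one_le_iff_ne_zero.mpr hs0), ← hs]
      exact addOrderOf_nsmul_eq_zero x
    have hy0 : y ≠ 0 := by
      rw [hy]
      intro h0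
      have := addOrderOf_dvd_iff_nsmul_eq_zero.mpr h0
      rw [hs] at this
      exact Nat.not_dvd_of_pos_of_lt (pow_pos hp.pos _)
        (pow_lt_pow_right₀ hp1 (Nat.sub_lt (Nat.pos_of_ne_zero hs0) one_pos)) this
    obtain ⟨m, hm⟩ := AddSubgroup.mem_zmultiples_iff.mp (hEtor y hyE hpy)
    have hpm : ¬ ((p : ℤ) ∣ m) := by
      rintro ⟨t, rfl⟩
      apply hy0
      rw [← hm, mul_comm, mul_smul, natCast_zsmul, hpc, smul_zero]
    have hcop : IsCoprime (p : ℤ) m :=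
      ((Nat.prime_iff_prime_int.mp hp).coprime_iff_not_dvd).mpr hpm
    obtain ⟨u, v, huv⟩ := hcop
    have : c = v • y := by
      calc c = (u * p + v * m) • c := by rw [huv, one_zsmul]
        _ = u • ((p : ℤ) • c) + v • (m • c) := by
            rw [add_zsmul, mul_zsmul, mul_zsmul]
        _ = v • y := by
            rw [natCast_zsmul, hpc, hm]
            simp
    rw [this]
    exact zsmul_mem hyK v
  -- Part A card
  have hcardA : ∀ K : AddSubgroup Fr, c ∈ K →
      Nat.card K = p * Nat.card (AddSubgroup.map ψ K) := by
    intro K hcK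
    set f := ψ.domRestrict K with hf
    have h1 : Nat.card K = Nat.card (↥K ⧸ f.ker) * Nat.card f.ker :=
      AddSubgroup.card_eq_card_quotient_mul_card_addSubgroup f.ker
    have h2 : Nat.card (↥K ⧸ f.ker) = Nat.card f.range :=
      Nat.card_congr (QuotientAddGroup.quotientKerEquivRange f).toEquiv
    have h3 : f.range = AddSubgroup.map ψ K := by
      rw [hf]
      exact AddMonoidHom.domRestrict_range (K := K) ψ
    have h4 : Nat.card f.ker = p := by
      rw [hf, AddMonoidHom.ker_domRestrict, hker]
      have := (addSubgroupOfEquivOfLe (zmultiples_le.mpr hcK)).toEquiv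
      rw [Nat.card_congr this, Nat.card_zmultiples, hordc]
    rw [h1, h2, h3, h4, mul_comm]
  -- reindex subgroups of a subgroup
  have hreindex : ∀ (T : AddSubgroup Fr) (b : ℂ),
      sigmaA b T = ∑ J ∈ Finset.univ.filter (fun J : AddSubgroup Fr => J ≤ T),
        (Nat.card J : ℂ) ^ b := by
    intro T b
    rw [sigmaA, finsum_eq_sum_of_fintype]
    refine Finset.sum_nbij' (fun K => AddSubgroup.map T.subtype K)
      (fun J => AddSubgroup.comap T.subtype J) ?_ ?_ ?_ ?_ ?_
    · intro K _
      simp only [Finset.mem_filter, Finset.mem_univ, true_and]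
      exact AddSubgroup.map_subtype_le K
    · intro J _
      exact Finset.mem_univ _
    · intro K _
      exact AddSubgroup.comap_map_eq_self_of_injective T.subtype_injective K
    · intro J hJ
      simp only [Finset.mem_filter, Finset.mem_univ, true_and] at hJ
      exact AddSubgroup.map_comap_eq_self (by rwa [AddSubgroup.range_subtype])
    · intro K _
      congr 1
      exact_mod_cast Nat.card_congr
        (AddSubgroup.equivMapOfInjective K T.subtype T.subtype_injective).toEquiv
  -- Part A
  have partA : ∑ K ∈ Finset.univ.filter (fun K : AddSubgroup Fr => c ∈ K),
      (Nat.card K : ℂ) ^ a = (p : ℂ) ^ a * sigmaA a Gr := by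
    rw [hreindex Gr a, Finset.mul_sum]
    refine Finset.sum_nbij' (fun K => AddSubgroup.map ψ K)
      (fun J => AddSubgroup.comap ψ J) ?_ ?_ ?_ ?_ ?_
    · intro K _
      simp only [Finset.mem_filter, Finset.mem_univ, true_and]
      exact hψGr K
    · intro J _
      simp only [Finset.mem_filter, Finset.mem_univ, true_and]
      exact AddSubgroup.mem_comap.mpr (by rw [hψc]; exact zero_mem J)
    · intro K hK
      simp only [Finset.mem_filter, Finset.mem_univ, true_and] at hK
      show AddSubgroup.comap ψ (AddSubgroup.map ψ K) = K
      rw [AddSubgroup.comap_map_eq, hker, sup_eq_left, zmultiples_le]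
      exact hK
    · intro J hJ
      simp only [Finset.mem_filter, Finset.mem_univ, true_and] at hJ
      show AddSubgroup.map ψ (AddSubgroup.comap ψ J) = J
      rw [AddSubgroup.map_comap_eq, inf_eq_right]
      exact le_trans hJ hrange
    · intro K hK
      simp only [Finset.mem_filter, Finset.mem_univ, true_and] at hK
      rw [hcardA K hK, natmul_cpow]
  -- Part B setup
  set ρ : Fr →+ Fr1 := (AddMonoidHom.id Fr - π2).codRestrict Fr1 hmem1 with hρdef
  have hρval : ∀ x, (ρ x : Fr) = x - π2 x := fun x => rfl
  set π2E : Fr →+ E := π2.codRestrict E hmem2 with hπ2Edef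
  have hπ2Eval : ∀ x, (π2E x : Fr) = π2 x := fun x => rfl
  -- injectivity of ρ on K when K ⊓ E = ⊥
  have hinjρ : ∀ K : AddSubgroup Fr, K ⊓ E = ⊥ →
      ∀ x ∈ K, ∀ y ∈ K, ρ x = ρ y → x = y := by
    intro K hKE x hx y hy hxy
    have h1 : x - π2 x = y - π2 y := by
      have := congrArg (Subtype.val) hxy
      rwa [hρval, hρval] at this
    have h2 : x - y = π2 x - π2 y := by linear_combination (norm := abel) h1
    have h3 : x - y ∈ K ⊓ E := by
      refine AddSubgroup.mem_inf.mpr ⟨sub_mem hx hy, ?_⟩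
      rw [h2, ← map_sub]
      exact hmem2 _
    rw [hKE, AddSubgroup.mem_bot, sub_eq_zero] at h3
    exact h3
  have hcardB : ∀ K : AddSubgroup Fr, c ∉ K →
      Nat.card K = Nat.card (AddSubgroup.map ρ K) := by
    intro K hcK
    have hKE := hdich K hcK
    have hinj : Function.Injective (ρ.domRestrict K) := by
      intro x y hxy
      exact Subtype.ext (hinjρ K hKE x x.2 y y.2 hxy)
    rw [← AddMonoidHom.domRestrict_range (K := K) ρ]
    exact Nat.card_congr (AddMonoidHom.ofInjective hinj).toEquiv
  have hcycE : IsAddCyclic E := by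
    refine ⟨⟨e, mem_zmultiples e⟩, fun x => ?_⟩
    obtain ⟨n, hn⟩ := AddSubgroup.mem_zmultiples_iff.mp x.2
    exact AddSubgroup.mem_zmultiples_iff.mpr ⟨n, Subtype.ext (by
      rw [← hn]
      simp)⟩
  have hcardE : Nat.card E = p ^ ℓ := by
    rw [hE, Nat.card_zmultiples, he]
  have hρc : ρ c = 0 := by
    apply Subtype.ext
    rw [hρval, hπ2r c hce, sub_self]
    rfl
  have hfibercard : ∀ D : AddSubgroup Fr1,
      (Finset.univ.filter (fun K : AddSubgroup Fr => ¬c ∈ K ∧ AddSubgroup.map ρ K = D)).card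
        = Nat.card D := by
    intro D
    rw [← Fintype.card_subtype, ← Nat.card_eq_fintype_card]
    -- the graph map
    set gam : (↥D →+ ↥E) → (↥D →+ Fr) :=
      fun χ => (Fr1.subtype.comp D.subtype) + (E.subtype.comp χ) with hgam
    have gam_apply : ∀ χ d, gam χ d = ((d : ↥Fr1) : Fr) + ((χ d : ↥E) : Fr) := fun χ d => rfl
    have hπ2gam : ∀ χ d, π2 (gam χ d) = ((χ d : ↥E) : Fr) := by
      intro χ d
      rw [gam_apply, map_add, hπ2l _ (SetLike.coe_mem (d : ↥Fr1)),
        hπ2r _ (SetLike.coe_mem (χ d)), zero_add]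
    have hρgam : ∀ χ d, ρ (gam χ d) = (d : ↥Fr1) := by
      intro χ d
      apply Subtype.ext
      rw [hρval, hπ2gam, gam_apply, add_sub_cancel_right]
    have hmapgam : ∀ χ, AddSubgroup.map ρ (gam χ).range = D := by
      intro χ
      rw [← AddMonoidHom.range_comp]
      have : ρ.comp (gam χ) = D.subtype := by
        ext d
        exact congrArg Subtype.val (hρgam χ d)
      rw [this, AddSubgroup.range_subtype]
    have hcgam : ∀ χ, c ∉ (gam χ).range := by
      rintro χ ⟨d, hd⟩
      have h2 : (d : ↥Fr1) = 0 := by rw [← hρgam χ d, hd, hρc]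
      have h3 : d = 0 := Subtype.ext (by rw [h2]; rfl)
      rw [h3, map_zero] at hd
      exact hc0 hd.symm
    have hbij : Function.Bijective
        (fun χ : ↥D →+ ↥E =>
          (⟨(gam χ).range, hcgam χ, hmapgam χ⟩ :
            {K : AddSubgroup Fr // ¬c ∈ K ∧ AddSubgroup.map ρ K = D})) := by
      constructor
      · intro χ1 χ2 h12
        have hr : (gam χ1).range = (gam χ2).range := congrArg Subtype.val h12
        ext d
        have h1 : gam χ1 d ∈ (gam χ2).range := by
          rw [← hr]; exact ⟨d, rfl⟩
        obtain ⟨d', hd'⟩ := h1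
        have : d' = d := by
          have := congrArg ρ hd'
          rw [hρgam, hρgam] at this
          exact Subtype.ext this
        rw [this] at hd'
        rw [gam_apply, gam_apply] at hd'
        exact (add_left_cancel hd').symm
      · rintro ⟨K, hcK, hKD⟩
        have hKE := hdich K hcK
        have hfmem : ∀ k : ↥K, (ρ.comp K.subtype) k ∈ D := by
          intro k
          rw [← hKD]
          exact AddSubgroup.mem_map_of_mem ρ k.2
        set f2 : ↥K →+ ↥D := AddMonoidHom.codRestrict (ρ.comp K.subtype) D hfmem with hf2
        have hf2val : ∀ k : ↥K, ((f2 k : ↥Fr1) : Fr) = (k : Fr) - π2 (k : Fr) := by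
          intro k
          exact hρval (k : Fr)
        have hbij2 : Function.Bijective f2 := by
          constructor
          · intro x y hxy
            refine Subtype.ext (hinjρ K hKE x x.2 y y.2 ?_)
            exact congrArg Subtype.val hxy
          · intro d
            have : (d : ↥Fr1) ∈ AddSubgroup.map ρ K := by rw [hKD]; exact d.2
            obtain ⟨x, hx, hρx⟩ := this
            exact ⟨⟨x, hx⟩, Subtype.ext hρx⟩
        set eK := AddEquiv.ofBijective f2 hbij2 with heK
        set χ : ↥D →+ ↥E := (π2E.comp K.subtype).comp eK.symm.toAddMonoidHom with hχ
        have key : ∀ d : ↥D, gam χ d = ((eK.symm d : ↥K) : Fr) := by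
          intro d
          set k := eK.symm d with hk
          have h1 : f2 k = d := by rw [hk]; exact eK.apply_symm_apply d
          have h2 : ((d : ↥Fr1) : Fr) = (k : Fr) - π2 (k : Fr) := by
            rw [← h1, hf2val]
          have h3 : ((χ d : ↥E) : Fr) = π2 (k : Fr) := by
            rw [hχ]
            exact hπ2Eval (k : Fr)
          rw [gam_apply, h2, h3, sub_add_cancel]
        refine ⟨χ, Subtype.ext ?_⟩
        show (gam χ).range = K
        apply le_antisymm
        · rintro _ ⟨d, rfl⟩
          rw [key]
          exact (eK.symm d).2
        · intro k hk
          refine ⟨eK ⟨k, hk⟩, ?_⟩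
          rw [key, eK.symm_apply_apply]
    have h1 : Nat.card (↥D →+ ↥E) =
        Nat.card {K : AddSubgroup Fr // ¬c ∈ K ∧ AddSubgroup.map ρ K = D} :=
      Nat.card_eq_of_bijective _ hbij
    have h2 : Nat.card (↥D →+ ↥E) = Nat.card ↥D := by
      refine card_addMonoidHom_eq ↥D ↥E (p ^ ℓ) (pow_ne_zero ℓ hp.pos.ne') hcycE hcardE ?_
      intro x
      refine Subtype.ext (Subtype.ext ?_)
      show ((((p ^ ℓ • x : ↥D) : ↥Fr1) : Fr)) = (((0 : ↥D) : ↥Fr1) : Fr)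
      rw [AddSubgroupClass.coe_nsmul, AddSubgroupClass.coe_nsmul]
      rw [hkill]
      rfl
    rw [← h1, h2]
  have partB : ∑ K ∈ Finset.univ.filter (fun K : AddSubgroup Fr => ¬c ∈ K),
      (Nat.card K : ℂ) ^ a = sigmaA (a + 1) Fr1 := by
    rw [sigmaA, finsum_eq_sum_of_fintype,
      ← Finset.sum_fiberwise (Finset.univ.filter (fun K : AddSubgroup Fr => ¬c ∈ K))
        (fun K => AddSubgroup.map ρ K) (fun K => (Nat.card K : ℂ) ^ a)]
    refine Finset.sum_congr rfl ?_
    intro D _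
    rw [Finset.filter_filter]
    have hconst : ∀ K ∈ Finset.univ.filter
        (fun K : AddSubgroup Fr => ¬c ∈ K ∧ AddSubgroup.map ρ K = D),
        (Nat.card K : ℂ) ^ a = (Nat.card D : ℂ) ^ a := by
      intro K hK
      simp only [Finset.mem_filter, Finset.mem_univ, true_and] at hK
      rw [hcardB K hK.1, hK.2]
    rw [Finset.sum_congr rfl hconst, Finset.sum_const, hfibercard D, nsmul_eq_mul,
      Complex.cpow_add _ _ (Nat.cast_ne_zero.mpr Nat.card_pos.ne'), Complex.cpow_one]
    ring
  -- assemble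
  have : sigmaA a Fr = ∑ K : AddSubgroup Fr, (Nat.card K : ℂ) ^ a :=
    finsum_eq_sum_of_fintype _
  rw [this, ← Finset.sum_filter_add_sum_filter_not Finset.univ
    (fun K : AddSubgroup Fr => c ∈ K), partA, partB]
end
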